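/- arXiv:1806.00304 — 4 statements merged into one kernel-verified Lean document; each statement's English description precedes it below -/
import Mathlib

section
/- Let ν be a finite Borel measure on ℝ³ with total mass M := ν(ℝ³), let s ∈ ℝ³, and let Θ > 0, ε > 0. Suppose that ν(closedBall(s, r)) ≤ Θ r for every r > 0. Then ∫_{ℝ³} (ε² + |s − t|²)^{−1/2} dν(t) ≤ Θ log(1 + 2M/(ε Θ)). -/
/-!
Layer cake: `∫ f dν = ∫₀^{1/ε} ν{f > τ} dτ` for the kernel `f t = (ε² + |s - t|²)^{-1/2} ≤ 1/ε`.
The superlevel set `{f > τ}` lies in the ball of radius `√(τ⁻² - ε²)` around `s`, so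
`ν{f > τ} ≤ min(M, Θ √(τ⁻² - ε²))`. Using `M` up to the level where the two bounds cross, i.e.
where the radius is `R = M/Θ`, and the density bound above it, the integral evaluates exactly to
`Θ log((√(ε² + R²) + R)/ε) ≤ Θ log(1 + 2R/ε)`.
-/

open MeasureTheory Set

lemma hasDerivAt_mul_sqrt_sub_log {ε x : ℝ} (hx : 0 < x) (hxε : ε ^ 2 < x⁻¹ ^ 2) :
    HasDerivAt (fun y => y * √(y⁻¹ ^ 2 - ε ^ 2) - Real.log (y⁻¹ + √(y⁻¹ ^ 2 - ε ^ 2)))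
      √(x⁻¹ ^ 2 - ε ^ 2) x := by
  have hq : 0 < x⁻¹ ^ 2 - ε ^ 2 := sub_pos.mpr hxε
  have hv : 0 < √(x⁻¹ ^ 2 - ε ^ 2) := Real.sqrt_pos.mpr hq
  have hsum : x⁻¹ + √(x⁻¹ ^ 2 - ε ^ 2) ≠ 0 := (add_pos (inv_pos.mpr hx) hv).ne'
  have hinv : HasDerivAt (fun y : ℝ => y⁻¹) (-(x ^ 2)⁻¹) x := hasDerivAt_inv hx.ne'
  have hsqrt := ((hinv.fun_pow 2).sub_const (ε ^ 2)).sqrt hq.ne'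
  refine (((hasDerivAt_id' x).fun_mul hsqrt).fun_sub
    ((hinv.fun_add hsqrt).log hsum)).congr_deriv ?_
  have hx0 := hx.ne'
  -- keeps `field_simp` from rewriting under the square root
  generalize √(x⁻¹ ^ 2 - ε ^ 2) = v at hv hsum ⊢
  field_simp
  linear_combination -2 * v * mul_inv_cancel₀ hx0

lemma integral_sqrt_inv_sq_sub_sq {ε a b : ℝ} (ha : 0 < a) (hab : a ≤ b)
    (hb : ε ^ 2 ≤ b⁻¹ ^ 2) :
    ∫ x in a..b, √(x⁻¹ ^ 2 - ε ^ 2) =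
      (b * √(b⁻¹ ^ 2 - ε ^ 2) - Real.log (b⁻¹ + √(b⁻¹ ^ 2 - ε ^ 2))) -
        (a * √(a⁻¹ ^ 2 - ε ^ 2) - Real.log (a⁻¹ + √(a⁻¹ ^ 2 - ε ^ 2))) := by
  have hpos : ∀ x ∈ Icc a b, 0 < x := fun x hx => ha.trans_le hx.1
  have hinv : ContinuousOn (fun x : ℝ => x⁻¹) (Icc a b) :=
    continuousOn_inv₀.mono fun x hx => (hpos x hx).ne'
  have hsqrt : ContinuousOn (fun x : ℝ => √(x⁻¹ ^ 2 - ε ^ 2)) (Icc a b) := by fun_prop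
  refine intervalIntegral.integral_eq_sub_of_hasDerivAt_of_le
    (f := fun y => y * √(y⁻¹ ^ 2 - ε ^ 2) - Real.log (y⁻¹ + √(y⁻¹ ^ 2 - ε ^ 2))) hab ?_
    (fun x hx => ?_) (hsqrt.intervalIntegrable_of_Icc hab)
  · refine (continuousOn_id.mul hsqrt).sub ((hinv.add hsqrt).log fun x hx => ?_)
    exact (add_pos_of_pos_of_nonneg (inv_pos.mpr (hpos x hx)) (Real.sqrt_nonneg _)).ne'
  · have hx0 := hpos x (Ioo_subset_Icc_self hx)
    refine hasDerivAt_mul_sqrt_sub_log hx0 (hb.trans_lt ?_)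
    exact pow_lt_pow_left₀ (inv_strictAnti₀ hx0 hx.2) (inv_pos.mpr (hx0.trans hx.2)).le
      two_ne_zero

lemma lintegral_ofReal_eq_setLIntegral_Ioc_meas_lt {α : Type*} [MeasurableSpace α]
    (μ : Measure α) {f : α → ℝ} {C : ℝ} (hf0 : 0 ≤ᵐ[μ] f) (hfC : ∀ a, f a ≤ C)
    (hf : AEMeasurable f μ) :
    ∫⁻ a, ENNReal.ofReal (f a) ∂μ = ∫⁻ t in Ioc 0 C, μ {a | t < f a} := by
  have hsupp : (fun t => μ {a | t < f a}).support ⊆ Iic C := by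
    intro t ht
    by_contra htC
    have : {a | t < f a} = ∅ := eq_empty_of_forall_notMem fun a ha =>
      htC (ha.trans_le (hfC a)).le
    exact ht (by simp [this])
  rw [lintegral_eq_lintegral_meas_lt μ hf0 hf, ← setLIntegral_eq_of_support_subset hsupp,
    Measure.restrict_restrict measurableSet_Iic, Iic_inter_Ioi]

lemma setOf_lt_inv_sqrt_subset_ball {E : Type*} [SeminormedAddCommGroup E] (s : E) (ε : ℝ)
    {τ : ℝ} (hτ : 0 < τ) :
    {t | τ < (√(ε ^ 2 + ‖s - t‖ ^ 2))⁻¹} ⊆ Metric.ball s √(τ⁻¹ ^ 2 - ε ^ 2) := by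
  intro t ht
  have hpos : 0 < √(ε ^ 2 + ‖s - t‖ ^ 2) := inv_pos.mp (hτ.trans ht)
  have hlt : √(ε ^ 2 + ‖s - t‖ ^ 2) < τ⁻¹ := (lt_inv_comm₀ hτ hpos).mp ht
  rw [Real.sqrt_lt' (inv_pos.mpr hτ)] at hlt
  rw [Metric.mem_ball, dist_comm, dist_eq_norm, Real.lt_sqrt (norm_nonneg _)]
  linarith

lemma measure_setOf_lt_inv_sqrt_le {E : Type*} [SeminormedAddCommGroup E] [MeasurableSpace E]
    (ν : Measure E) (s : E) {Θ ε τ : ℝ}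
    (hdens : ∀ r : ℝ, 0 < r → ν (Metric.closedBall s r) ≤ ENNReal.ofReal (Θ * r)) (hτ : 0 < τ) :
    ν {t | τ < (√(ε ^ 2 + ‖s - t‖ ^ 2))⁻¹} ≤ ENNReal.ofReal (Θ * √(τ⁻¹ ^ 2 - ε ^ 2)) := by
  rcases eq_empty_or_nonempty {t | τ < (√(ε ^ 2 + ‖s - t‖ ^ 2))⁻¹} with hempty | ⟨t, ht⟩
  · simp [hempty]
  have hsub := setOf_lt_inv_sqrt_subset_ball s ε hτ
  have hr : 0 < √(τ⁻¹ ^ 2 - ε ^ 2) := dist_nonneg.trans_lt (hsub ht)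
  exact (measure_mono (hsub.trans Metric.ball_subset_closedBall)).trans (hdens _ hr)

lemma integral_inv_sqrt_le_of_measure_closedBall_le {E : Type*} [NormedAddCommGroup E]
    [MeasurableSpace E] [OpensMeasurableSpace E] (ν : Measure E) [IsFiniteMeasure ν] (s : E)
    {Θ ε l : ℝ} (hΘ : 0 ≤ Θ) (hε : 0 < ε) (hl : 0 < l) (hlε : l ≤ ε⁻¹)
    (hdens : ∀ r : ℝ, 0 < r → ν (Metric.closedBall s r) ≤ ENNReal.ofReal (Θ * r)) :
    ∫ t, (√(ε ^ 2 + ‖s - t‖ ^ 2))⁻¹ ∂ν ≤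
      (ν univ).toReal * l + Θ * ∫ x in l..ε⁻¹, √(x⁻¹ ^ 2 - ε ^ 2) := by
  set f : E → ℝ := fun t => (√(ε ^ 2 + ‖s - t‖ ^ 2))⁻¹
  have hsqrt : ∀ t, ε ≤ √(ε ^ 2 + ‖s - t‖ ^ 2) := fun t =>
    Real.le_sqrt_of_sq_le (le_add_of_nonneg_right (by positivity))
  have hf0 : 0 ≤ f := fun t => inv_nonneg.mpr (Real.sqrt_nonneg _)
  have hfε : ∀ t, f t ≤ ε⁻¹ := fun t => inv_anti₀ hε (hsqrt t)
  have hf : Continuous f := (by fun_prop : Continuous fun t => √(ε ^ 2 + ‖s - t‖ ^ 2)).inv₀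
    fun t => (hε.trans_le (hsqrt t)).ne'
  have hg : ContinuousOn (fun x : ℝ => Θ * √(x⁻¹ ^ 2 - ε ^ 2)) (Icc l ε⁻¹) := by
    have : ContinuousOn (fun x : ℝ => x⁻¹) (Icc l ε⁻¹) :=
      continuousOn_inv₀.mono fun x hx => (hl.trans_le hx.1).ne'
    fun_prop
  have hg0 : ∀ x, 0 ≤ Θ * √(x⁻¹ ^ 2 - ε ^ 2) := fun x => mul_nonneg hΘ (Real.sqrt_nonneg _)
  rw [integral_eq_lintegral_of_nonneg_ae (ae_of_all _ hf0) hf.aestronglyMeasurable,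
    ← intervalIntegral.integral_const_mul, intervalIntegral.integral_of_le hlε]
  refine ENNReal.toReal_le_of_le_ofReal (by positivity) ?_
  rw [lintegral_ofReal_eq_setLIntegral_Ioc_meas_lt ν (ae_of_all _ hf0) hfε hf.aemeasurable,
    ← Ioc_union_Ioc_eq_Ioc hl.le hlε, ENNReal.ofReal_add (by positivity)
      (setIntegral_nonneg measurableSet_Ioc fun x _ => hg0 x),
    ofReal_integral_eq_lintegral_ofReal ((hg.integrableOn_Icc).mono_set Ioc_subset_Icc_self)
      (ae_of_all _ hg0)]
  calc ∫⁻ τ in Ioc 0 l ∪ Ioc l ε⁻¹, ν {t | τ < f t}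
      ≤ (∫⁻ _ in Ioc 0 l, ν univ) +
          ∫⁻ τ in Ioc l ε⁻¹, ENNReal.ofReal (Θ * √(τ⁻¹ ^ 2 - ε ^ 2)) :=
        (lintegral_union_le _ _ _).trans (add_le_add
          (setLIntegral_mono measurable_const fun τ _ => measure_mono (subset_univ _))
          (setLIntegral_mono (by fun_prop) fun τ hτ =>
            measure_setOf_lt_inv_sqrt_le ν s hdens (hl.trans hτ.1)))
    _ = _ := by
        rw [setLIntegral_const, Real.volume_Ioc, sub_zero,
          ENNReal.ofReal_mul ENNReal.toReal_nonneg, ENNReal.ofReal_toReal (measure_ne_top ν _)]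

lemma mul_inv_add_integral_sqrt_inv_sq_sub_sq_le_log {ε R : ℝ} (hε : 0 < ε) (hR : 0 ≤ R) :
    R * (√(ε ^ 2 + R ^ 2))⁻¹ + ∫ x in (√(ε ^ 2 + R ^ 2))⁻¹..ε⁻¹, √(x⁻¹ ^ 2 - ε ^ 2) ≤
      Real.log (1 + 2 * R / ε) := by
  set B := √(ε ^ 2 + R ^ 2)
  have hB2 : B ^ 2 - ε ^ 2 = R ^ 2 := by rw [Real.sq_sqrt (by positivity)]; ring
  have hεB : ε ≤ B := Real.le_sqrt_of_sq_le (le_add_of_nonneg_right (sq_nonneg R))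
  have hBR : B ≤ ε + R := Real.sqrt_le_iff.mpr ⟨by positivity, by nlinarith⟩
  have hB := hε.trans_le hεB
  rw [integral_sqrt_inv_sq_sub_sq (inv_pos.mpr hB) (inv_anti₀ hε hεB) (by rw [inv_inv]),
    inv_inv, inv_inv, hB2, sub_self, Real.sqrt_zero, Real.sqrt_sq hR, add_zero, mul_zero,
    zero_sub]
  calc R * B⁻¹ + (-Real.log ε - (B⁻¹ * R - Real.log (B + R))) = Real.log ((B + R) / ε) := by
        rw [Real.log_div (by positivity) hε.ne']; ring
    _ ≤ Real.log (1 + 2 * R / ε) := by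
        gcongr
        rw [div_le_iff₀ hε]
        field_simp
        linarith

/-- Density-constrained potential estimate: if a finite measure `ν` on `ℝ³` satisfies
`ν(B̄(s,r)) ≤ Θ r` for all `r > 0`, then
`∫ (ε² + |s−t|²)^{-1/2} dν(t) ≤ Θ log(1 + 2M/(εΘ))` with `M = ν(ℝ³)`. -/
theorem stmt6 (ν : Measure (EuclideanSpace ℝ (Fin 3))) [IsFiniteMeasure ν]
    (s : EuclideanSpace ℝ (Fin 3)) (Θ ε : ℝ) (hΘ : 0 < Θ) (hε : 0 < ε)
    (hdens : ∀ r : ℝ, 0 < r → ν (Metric.closedBall s r) ≤ ENNReal.ofReal (Θ * r)) :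
    (∫ t, (Real.sqrt (ε ^ 2 + ‖s - t‖ ^ 2))⁻¹ ∂ν) ≤
      Θ * Real.log (1 + 2 * (ν Set.univ).toReal / (ε * Θ)) := by
  set R := (ν univ).toReal / Θ
  have hR : 0 ≤ R := div_nonneg ENNReal.toReal_nonneg hΘ.le
  set B := √(ε ^ 2 + R ^ 2)
  have hεB : ε ≤ B := Real.le_sqrt_of_sq_le (le_add_of_nonneg_right (sq_nonneg R))
  calc _ ≤ (ν univ).toReal * B⁻¹ + Θ * ∫ x in B⁻¹..ε⁻¹, √(x⁻¹ ^ 2 - ε ^ 2) :=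
        integral_inv_sqrt_le_of_measure_closedBall_le ν s hΘ.le hε
          (inv_pos.mpr (hε.trans_le hεB)) (inv_anti₀ hε hεB) hdens
    _ = Θ * (R * B⁻¹ + ∫ x in B⁻¹..ε⁻¹, √(x⁻¹ ^ 2 - ε ^ 2)) := by
        simp only [R]; field_simp
    _ ≤ Θ * Real.log (1 + 2 * R / ε) :=
        mul_le_mul_of_nonneg_left (mul_inv_add_integral_sqrt_inv_sq_sub_sq_le_log hε hR) hΘ.le
    _ = Θ * Real.log (1 + 2 * (ν univ).toReal / (ε * Θ)) := by
        simp only [R]; congr 3; field_simp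
end

section
/- Let ε > 0 and let K : ℝ³ → ℝ^{3×3×3×3} be C¹ satisfying the pointwise bound ‖DK(s)‖ ≤ C₀/(ε √(ε² + |s|²)) for all s ∈ ℝ³, for some C₀ > 0. Let γ : ℝ → ℝ³ be Lipschitz and L-periodic with |γ′(s)| = 1 a.e., let b ∈ ℝ³, and let ν denote the pushforward under γ of Lebesgue measure on [0, L] (so ν(ℝ³) = L). Suppose there is Θ > 0 such that ν(closedBall(x, r)) ≤ Θ r for every x ∈ ℝ³ and r > 0. Then the Peach–Koehler force f along γ (defined below) satisfies, for a.e. s, |f(s)| ≤ c (C₀ |b|² Θ / ε) log(1 + 2L/(ε Θ)), where c is a constant depending only on the dimension. -/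
open MeasureTheory
open scoped BigOperators RealInnerProductSpace

noncomputable section

/-- The Levi-Civita alternating tensor on `ℝ³`. -/
def levi (i j k : Fin 3) : ℝ :=
  ((j : ℝ) - (i : ℝ)) * ((k : ℝ) - (j : ℝ)) * ((k : ℝ) - (i : ℝ)) / 2

/-- `G_k(s) = ∫₀^L 𝖠_{klm} ∂_m K_{alcd}(γ(s) − γ(t)) b_a b_c γ′_d(t) dt`. -/
def pkG (K : EuclideanSpace ℝ (Fin 3) → Fin 3 → Fin 3 → Fin 3 → Fin 3 → ℝ)
    (γ : ℝ → EuclideanSpace ℝ (Fin 3)) (L : ℝ) (b : EuclideanSpace ℝ (Fin 3))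
    (s : ℝ) (k : Fin 3) : ℝ :=
  ∫ t in (0 : ℝ)..L, ∑ l, ∑ m, ∑ a, ∑ c, ∑ d,
    levi k l m *
      (fderiv ℝ K (γ s - γ t) (EuclideanSpace.single m (1 : ℝ)) a l c d) *
      b a * b c * (deriv γ t d)

/-- The Peach–Koehler force along a parametrized closed curve:
`f(s) = G(s) × γ′(s)`, i.e. `f_i(s) = 𝖠_{ilm} G_l(s) γ′_m(s)`. -/
def pkF (K : EuclideanSpace ℝ (Fin 3) → Fin 3 → Fin 3 → Fin 3 → Fin 3 → ℝ)
    (γ : ℝ → EuclideanSpace ℝ (Fin 3)) (L : ℝ) (b : EuclideanSpace ℝ (Fin 3))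
    (s : ℝ) : EuclideanSpace ℝ (Fin 3) :=
  (WithLp.equiv 2 (Fin 3 → ℝ)).symm
    (fun i => ∑ l, ∑ m, levi i l m * pkG K γ L b s l * (deriv γ s m))

/-!
Each term of the integrand of `G` is bounded by `‖DK(γ s - γ t)‖ ‖b‖²`, so `|G(s)|` is controlled by
`(C₀‖b‖²/ε) ∫ dν(x) / √(ε² + |γ s - x|²)`. Cutting this potential into the balls of radius
`2^(j+1) ε`, `j < N`, each contributing at most `Θ` by the mass bound, plus a remainder where the
integrand is at most `(2^N ε)⁻¹`, bounds it by `L/(2^N ε) + NΘ`; taking `2^N ≈ 2L/(εΘ)` gives the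
logarithm.
-/

open Metric Finset Real

lemma abs_levi_le_one (i j k : Fin 3) : |levi i j k| ≤ 1 := by
  fin_cases i <;> fin_cases j <;> fin_cases k <;> norm_num [levi]

lemma EuclideanSpace.abs_apply_le_norm {ι : Type*} [Fintype ι] (v : EuclideanSpace ℝ ι) (i : ι) :
    |v i| ≤ ‖v‖ :=
  Real.norm_eq_abs (v i) ▸ PiLp.norm_apply_le v i

lemma EuclideanSpace.norm_le_sum_abs_apply {ι : Type*} [Fintype ι] [DecidableEq ι]
    (v : EuclideanSpace ℝ ι) : ‖v‖ ≤ ∑ i, |v i| := by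
  conv_lhs => rw [← (EuclideanSpace.basisFun ι ℝ).sum_repr v]
  refine (norm_sum_le _ _).trans (le_of_eq (Finset.sum_congr rfl fun i _ => ?_))
  simp [norm_smul]

lemma abs_sum_fin_le {n : ℕ} (f : Fin n → ℝ) {C : ℝ} (h : ∀ i, |f i| ≤ C) :
    |∑ i, f i| ≤ n * C := by
  calc |∑ i, f i| ≤ ∑ i, |f i| := Finset.abs_sum_le_sum_abs _ _
    _ ≤ ∑ _i : Fin n, C := Finset.sum_le_sum fun i _ => h i
    _ = n * C := by simp

lemma abs_apply_single_le_opNorm {ι α β δ η : Type*} [Fintype ι] [DecidableEq ι] [Fintype α]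
    [Fintype β] [Fintype δ] [Fintype η] (T : EuclideanSpace ℝ ι →L[ℝ] (α → β → δ → η → ℝ))
    (m : ι) (a : α) (l : β) (c : δ) (d : η) :
    |T (EuclideanSpace.single m 1) a l c d| ≤ ‖T‖ := by
  set w := T (EuclideanSpace.single m 1)
  calc |w a l c d| ≤ ‖w‖ :=
        (norm_le_pi_norm _ a).trans' <| (norm_le_pi_norm _ l).trans' <|
          (norm_le_pi_norm _ c).trans' (norm_le_pi_norm (w a l c) d)
    _ ≤ ‖T‖ * ‖EuclideanSpace.single m (1 : ℝ)‖ := T.le_opNorm _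
    _ = ‖T‖ := by simp

lemma abs_pkG_integrand_le (K : EuclideanSpace ℝ (Fin 3) → Fin 3 → Fin 3 → Fin 3 → Fin 3 → ℝ)
    (y b v : EuclideanSpace ℝ (Fin 3)) (k : Fin 3) :
    |∑ l, ∑ m, ∑ a, ∑ c, ∑ d,
        levi k l m * (fderiv ℝ K y (EuclideanSpace.single m (1 : ℝ)) a l c d) *
          b a * b c * v d| ≤ 243 * (‖fderiv ℝ K y‖ * ‖b‖ ^ 2 * ‖v‖) := by
  have hterm : ∀ l m a c d : Fin 3,
      |levi k l m * (fderiv ℝ K y (EuclideanSpace.single m (1 : ℝ)) a l c d) *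
        b a * b c * v d| ≤ ‖fderiv ℝ K y‖ * ‖b‖ ^ 2 * ‖v‖ := by
    intro l m a c d
    simp only [abs_mul]
    calc |levi k l m| * |fderiv ℝ K y (EuclideanSpace.single m 1) a l c d| * |b a| * |b c| * |v d|
        ≤ 1 * ‖fderiv ℝ K y‖ * ‖b‖ * ‖b‖ * ‖v‖ := by
          gcongr
          · exact abs_levi_le_one k l m
          · exact abs_apply_single_le_opNorm _ m a l c d
          all_goals exact EuclideanSpace.abs_apply_le_norm _ _
      _ = ‖fderiv ℝ K y‖ * ‖b‖ ^ 2 * ‖v‖ := by ring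
  refine (abs_sum_fin_le _ fun l => abs_sum_fin_le _ fun m => abs_sum_fin_le _ fun a =>
    abs_sum_fin_le _ fun c => abs_sum_fin_le _ fun d => hterm l m a c d).trans_eq ?_
  push_cast
  ring

lemma abs_pkG_le (K : EuclideanSpace ℝ (Fin 3) → Fin 3 → Fin 3 → Fin 3 → Fin 3 → ℝ)
    {ε C₀ L : ℝ} (hε : 0 < ε) (hL : 0 ≤ L)
    (hDK : ∀ y, ‖fderiv ℝ K y‖ ≤ C₀ / (ε * √(ε ^ 2 + ‖y‖ ^ 2)))
    {γ : ℝ → EuclideanSpace ℝ (Fin 3)} (hγ : Continuous γ) (hγ' : ∀ᵐ t, ‖deriv γ t‖ ≤ 1)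
    (b : EuclideanSpace ℝ (Fin 3)) (s : ℝ) (k : Fin 3) :
    |pkG K γ L b s k| ≤
      243 * C₀ * ‖b‖ ^ 2 / ε * ∫ t in (0 : ℝ)..L, (√(ε ^ 2 + ‖γ s - γ t‖ ^ 2))⁻¹ := by
  have hroot : ∀ t, 0 < √(ε ^ 2 + ‖γ s - γ t‖ ^ 2) := fun t => sqrt_pos.2 (by positivity)
  rw [pkG, ← intervalIntegral.integral_const_mul, ← Real.norm_eq_abs]
  refine intervalIntegral.norm_integral_le_of_norm_le hL ?_ ?_
  · filter_upwards [hγ'] with t ht _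
    refine (abs_pkG_integrand_le K _ b _ k).trans ?_
    calc 243 * (‖fderiv ℝ K (γ s - γ t)‖ * ‖b‖ ^ 2 * ‖deriv γ t‖)
        ≤ 243 * (C₀ / (ε * √(ε ^ 2 + ‖γ s - γ t‖ ^ 2)) * ‖b‖ ^ 2 * 1) := by
          gcongr
          · exact mul_nonneg ((norm_nonneg _).trans (hDK _)) (sq_nonneg _)
          · exact hDK _
      _ = _ := by field_simp
  · exact (continuous_const.mul <|
      (continuous_const.add ((continuous_const.sub hγ).norm.pow 2)).sqrt.inv₀
        fun t => (hroot t).ne').intervalIntegrable _ _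

lemma norm_pkF_le (K : EuclideanSpace ℝ (Fin 3) → Fin 3 → Fin 3 → Fin 3 → Fin 3 → ℝ)
    (γ : ℝ → EuclideanSpace ℝ (Fin 3)) (L : ℝ) (b : EuclideanSpace ℝ (Fin 3)) {s G : ℝ}
    (hG : ∀ l, |pkG K γ L b s l| ≤ G) (hγ' : ‖deriv γ s‖ ≤ 1) :
    ‖pkF K γ L b s‖ ≤ 27 * G := by
  have hG0 : 0 ≤ G := (abs_nonneg _).trans (hG 0)
  have hcoord : ∀ i, |pkF K γ L b s i| ≤ 3 * (3 * G) := fun i =>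
    abs_sum_fin_le _ fun l => abs_sum_fin_le _ fun m => by
      simp only [abs_mul]
      calc |levi i l m| * |pkG K γ L b s l| * |deriv γ s m| ≤ 1 * G * 1 := by
            gcongr
            · exact abs_levi_le_one i l m
            · exact hG l
            · exact (EuclideanSpace.abs_apply_le_norm _ m).trans hγ'
        _ = G := by ring
  calc ‖pkF K γ L b s‖ ≤ ∑ i, |pkF K γ L b s i| := EuclideanSpace.norm_le_sum_abs_apply _
    _ ≤ ∑ _i : Fin 3, 3 * (3 * G) := Finset.sum_le_sum fun i _ => hcoord i
    _ = 27 * G := by simp; ring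

lemma le_four_mul_log_of_forall_le {J A Θ : ℝ} (hA : 0 ≤ A) (hΘ : 0 < Θ)
    (hJ : ∀ N : ℕ, J ≤ A / 2 ^ N + N * Θ) : J ≤ 4 * Θ * log (1 + 2 * A / Θ) := by
  set x := 2 * A / Θ
  have hx0 : 0 ≤ x := by positivity
  have hA_eq : A = Θ * x / 2 := by simp only [x]; field_simp
  rcases le_or_gt x 1 with hx1 | hx1
  · have hJA : J ≤ A := by simpa using hJ 0
    have hlog : x / 2 ≤ log (1 + x) :=
      calc x / 2 ≤ x / (1 + x) := div_le_div_of_nonneg_left hx0 (by positivity) (by linarith)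
        _ = 1 - (1 + x)⁻¹ := by field_simp; ring
        _ ≤ log (1 + x) := one_sub_inv_le_log_of_pos (by positivity)
    nlinarith
  · obtain ⟨n, hn_le, hn_lt⟩ := exists_nat_pow_near hx1.le one_lt_two
    have htail : A / 2 ^ (n + 1) ≤ Θ / 2 := by
      rw [hA_eq, div_le_iff₀ (by positivity)]
      nlinarith
    have hn_log : n * log 2 ≤ log (1 + x) := by
      rw [← log_pow]
      exact log_le_log (by positivity) (by linarith)
    have hlog2 : log 2 ≤ log (1 + x) := log_le_log two_pos (by linarith)
    have hcount : (n : ℝ) + 3 / 2 ≤ 4 * log (1 + x) := by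
      nlinarith [log_two_gt_d9, mul_le_mul_of_nonneg_left log_two_gt_d9.le n.cast_nonneg]
    have hJn := hJ (n + 1)
    push_cast at hJn
    nlinarith [mul_le_mul_of_nonneg_left hcount hΘ.le]

section Potential

variable {X : Type*} [PseudoMetricSpace X] {ε : ℝ}

lemma inv_sqrt_le_dyadic_sum (hε : 0 < ε) (p x : X) (N : ℕ) :
    (√(ε ^ 2 + dist p x ^ 2))⁻¹ ≤
      (2 ^ N * ε)⁻¹ + ∑ j ∈ range N,
        (closedBall p (2 ^ (j + 1) * ε)).indicator (fun _ => (2 ^ (j + 1) * ε)⁻¹) x := by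
  induction N with
  | zero => simpa using inv_anti₀ hε (le_sqrt_of_sq_le (le_add_of_nonneg_right (sq_nonneg _)))
  | succ N ih =>
    have hhalf : (2 ^ N * ε)⁻¹ = (2 ^ (N + 1) * ε)⁻¹ + (2 ^ (N + 1) * ε)⁻¹ := by
      field_simp; ring
    have hshell_pos : 0 < (2 ^ (N + 1) * ε)⁻¹ := by positivity
    rw [Finset.sum_range_succ, ← add_assoc]
    by_cases hx : dist p x ≤ 2 ^ (N + 1) * ε
    · rw [Set.indicator_of_mem (mem_closedBall'.2 hx)]
      linarith
    · have hsq := pow_le_pow_left₀ (by positivity) (not_le.1 hx).le 2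
      have hfar : (√(ε ^ 2 + dist p x ^ 2))⁻¹ ≤ (2 ^ (N + 1) * ε)⁻¹ :=
        inv_anti₀ (by positivity) (le_sqrt_of_sq_le (by nlinarith))
      have hsum : 0 ≤ ∑ j ∈ range N,
          (closedBall p (2 ^ (j + 1) * ε)).indicator (fun _ => (2 ^ (j + 1) * ε)⁻¹) x :=
        Finset.sum_nonneg fun j _ => Set.indicator_nonneg (fun _ _ => by positivity) _
      rw [Set.indicator_of_notMem (fun h => hx (mem_closedBall'.1 h))]
      linarith

lemma integral_inv_sqrt_dist_le [MeasurableSpace X] [OpensMeasurableSpace X] (ν : Measure X)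
    [IsFiniteMeasure ν] {Θ : ℝ} (hε : 0 < ε) (hΘ : 0 ≤ Θ) (p : X)
    (hball : ∀ r, 0 < r → ν (closedBall p r) ≤ ENNReal.ofReal (Θ * r)) (N : ℕ) :
    ∫ x, (√(ε ^ 2 + dist p x ^ 2))⁻¹ ∂ν ≤ ν.real Set.univ / (2 ^ N * ε) + N * Θ := by
  have hshell : ∀ j : ℕ, Integrable
      ((closedBall p (2 ^ (j + 1) * ε)).indicator fun _ => (2 ^ (j + 1) * ε)⁻¹) ν :=
    fun j => (integrable_const _).indicator measurableSet_closedBall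
  have hshell_le : ∀ j : ℕ, ∫ x, (closedBall p (2 ^ (j + 1) * ε)).indicator
      (fun _ => (2 ^ (j + 1) * ε)⁻¹) x ∂ν ≤ Θ := by
    intro j
    have hr : (0 : ℝ) < 2 ^ (j + 1) * ε := by positivity
    rw [integral_indicator_const _ measurableSet_closedBall, smul_eq_mul,
      ← div_eq_mul_inv, div_le_iff₀ hr]
    exact ENNReal.toReal_le_of_le_ofReal (by positivity) (hball _ hr)
  calc ∫ x, (√(ε ^ 2 + dist p x ^ 2))⁻¹ ∂ν
      ≤ ∫ x, ((2 ^ N * ε)⁻¹ + ∑ j ∈ range N, (closedBall p (2 ^ (j + 1) * ε)).indicator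
          (fun _ => (2 ^ (j + 1) * ε)⁻¹) x) ∂ν :=
        integral_mono_of_nonneg (ae_of_all _ fun x => by positivity)
          ((integrable_const _).add (integrable_finsetSum _ fun j _ => hshell j))
          (ae_of_all _ fun x => inv_sqrt_le_dyadic_sum hε p x N)
    _ ≤ ν.real Set.univ / (2 ^ N * ε) + ∑ _j ∈ range N, Θ := by
        rw [integral_add (integrable_const _) (integrable_finsetSum _ fun j _ => hshell j),
          integral_const, integral_finsetSum _ fun j _ => hshell j, smul_eq_mul, div_eq_mul_inv]
        gcongr with j
        exact hshell_le j
    _ = ν.real Set.univ / (2 ^ N * ε) + N * Θ := by simp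

lemma intervalIntegral_inv_sqrt_dist_le [MeasurableSpace X] [BorelSpace X]
    {γ : ℝ → X} (hγ : Continuous γ) {L Θ : ℝ} (hε : 0 < ε) (hL : 0 ≤ L) (hΘ : 0 < Θ)
    (hmass : ∀ x r, 0 < r →
      Measure.map γ (volume.restrict (Set.Icc 0 L)) (closedBall x r) ≤ ENNReal.ofReal (Θ * r))
    (p : X) :
    ∫ t in (0 : ℝ)..L, (√(ε ^ 2 + dist p (γ t) ^ 2))⁻¹ ≤
      4 * Θ * log (1 + 2 * L / (ε * Θ)) := by
  set ν := Measure.map γ (volume.restrict (Set.Icc 0 L))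
  have hν_univ : ν.real Set.univ = L := by
    rw [Measure.real, Measure.map_apply hγ.measurable MeasurableSet.univ]
    simp [hL]
  have hpush : ∫ t in (0 : ℝ)..L, (√(ε ^ 2 + dist p (γ t) ^ 2))⁻¹ =
      ∫ x, (√(ε ^ 2 + dist p x ^ 2))⁻¹ ∂ν := by
    rw [intervalIntegral.integral_of_le hL, ← integral_Icc_eq_integral_Ioc,
      integral_map hγ.aemeasurable]
    exact ((continuous_const.add ((continuous_const.dist continuous_id).pow 2)).sqrt.inv₀
      fun x => (sqrt_pos.2 (add_pos_of_pos_of_nonneg (pow_pos hε 2) (sq_nonneg _))).ne')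
      |>.aestronglyMeasurable
  have hlog := le_four_mul_log_of_forall_le (div_nonneg hL hε.le) hΘ fun N =>
    (integral_inv_sqrt_dist_le ν hε hΘ.le p (hmass p) N).trans_eq (by rw [hν_univ]; ring)
  rw [hpush]
  convert hlog using 4
  field_simp

end Potential

/-- The `L^∞` bound on the Peach–Koehler force: there is a dimensional constant `c` such
that under a kernel-derivative bound `‖DK(s)‖ ≤ C₀/(ε√(ε²+|s|²))` and a mass-ratio bound
`ν(B̄(x,r)) ≤ Θr` on the image measure `ν` of the curve,
`|f(s)| ≤ c (C₀|b|²Θ/ε) log(1 + 2L/(εΘ))` for a.e. `s`. -/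
theorem stmt10 :
    ∃ c : ℝ, 0 < c ∧
      ∀ (ε C₀ : ℝ), 0 < ε → 0 < C₀ →
      ∀ (K : EuclideanSpace ℝ (Fin 3) → Fin 3 → Fin 3 → Fin 3 → Fin 3 → ℝ),
        ContDiff ℝ 1 K →
        (∀ s : EuclideanSpace ℝ (Fin 3),
          ‖fderiv ℝ K s‖ ≤ C₀ / (ε * Real.sqrt (ε ^ 2 + ‖s‖ ^ 2))) →
      ∀ (γ : ℝ → EuclideanSpace ℝ (Fin 3)) (Cγ : NNReal), LipschitzWith Cγ γ →
      ∀ L : ℝ, 0 < L → Function.Periodic γ L →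
      (∀ᵐ s : ℝ, ‖deriv γ s‖ = 1) →
      ∀ (b : EuclideanSpace ℝ (Fin 3)) (Θ : ℝ), 0 < Θ →
      (∀ (x : EuclideanSpace ℝ (Fin 3)) (r : ℝ), 0 < r →
        Measure.map γ (volume.restrict (Set.Icc (0 : ℝ) L)) (Metric.closedBall x r) ≤
          ENNReal.ofReal (Θ * r)) →
      ∀ᵐ s : ℝ,
        ‖pkF K γ L b s‖ ≤ c * (C₀ * ‖b‖ ^ 2 * Θ / ε) * Real.log (1 + 2 * L / (ε * Θ)) := by
  refine ⟨26244, by norm_num, ?_⟩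
  intro ε C₀ hε hC₀ K _ hDK γ _ hγ L hL _ hunit b Θ hΘ hmass
  filter_upwards [hunit] with s hs
  have hpotential : ∫ t in (0 : ℝ)..L, (√(ε ^ 2 + ‖γ s - γ t‖ ^ 2))⁻¹ ≤
      4 * Θ * Real.log (1 + 2 * L / (ε * Θ)) := by
    simpa only [dist_eq_norm] using
      intervalIntegral_inv_sqrt_dist_le hγ.continuous hε hL.le hΘ hmass (γ s)
  have hG : ∀ l, |pkG K γ L b s l| ≤
      243 * C₀ * ‖b‖ ^ 2 / ε * (4 * Θ * Real.log (1 + 2 * L / (ε * Θ))) := fun l =>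
    (abs_pkG_le K hε hL.le hDK hγ.continuous (hunit.mono fun _ h => h.le) b s l).trans
      (by gcongr)
  calc ‖pkF K γ L b s‖
      ≤ 27 * (243 * C₀ * ‖b‖ ^ 2 / ε * (4 * Θ * Real.log (1 + 2 * L / (ε * Θ)))) :=
        norm_pkF_le K γ L b hG hs.le
    _ = 26244 * (C₀ * ‖b‖ ^ 2 * Θ / ε) * Real.log (1 + 2 * L / (ε * Θ)) := by ring

end
end

section
/- Let ε > 0, κ > 0, M₀ > 0 and T > 0. If m : [0, T] → ℝ is differentiable with m(0) = M₀, m(t) ≥ 0 for all t, and m′(t) ≤ κ (1 + 2m(t)/ε) log(1 + 2m(t)/ε) for all t ∈ [0, T], then log(1 + 2m(t)/ε) ≤ e^{2κt/ε} log(1 + 2M₀/ε) for all t ∈ [0, T]; equivalently, m(t) ≤ (ε/2)[(1 + 2M₀/ε)^{exp(2κt/ε)} − 1]. -/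
/-- Logarithmic ODE comparison principle: if `m(0) = M₀ > 0`, `m ≥ 0`, and
`m′(t) ≤ κ(1 + 2m/ε)log(1 + 2m/ε)` on `[0,T]`, then
`log(1 + 2m(t)/ε) ≤ e^{2κt/ε} log(1 + 2M₀/ε)`; equivalently
`m(t) ≤ (ε/2)[(1 + 2M₀/ε)^{exp(2κt/ε)} − 1]`. -/
theorem stmt14 (ε κ M₀ T : ℝ) (hε : 0 < ε) (hκ : 0 < κ) (hM₀ : 0 < M₀) (hT : 0 < T)
    (m m' : ℝ → ℝ)
    (hderiv : ∀ t ∈ Set.Icc (0 : ℝ) T, HasDerivAt m (m' t) t)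
    (h0 : m 0 = M₀)
    (hnonneg : ∀ t ∈ Set.Icc (0 : ℝ) T, 0 ≤ m t)
    (hineq : ∀ t ∈ Set.Icc (0 : ℝ) T,
      m' t ≤ κ * (1 + 2 * m t / ε) * Real.log (1 + 2 * m t / ε)) :
    ∀ t ∈ Set.Icc (0 : ℝ) T,
      Real.log (1 + 2 * m t / ε) ≤ Real.exp (2 * κ * t / ε) * Real.log (1 + 2 * M₀ / ε) ∧
      m t ≤ ε / 2 * ((1 + 2 * M₀ / ε) ^ Real.exp (2 * κ * t / ε) - 1) := by
  set A : ℝ → ℝ := fun t => 1 + 2 * m t / ε with hA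
  have hApos : ∀ t ∈ Set.Icc (0 : ℝ) T, (1:ℝ) ≤ A t := by
    intro t ht
    have := hnonneg t ht
    have : 0 ≤ 2 * m t / ε := by positivity
    simp [hA]; linarith
  set u : ℝ → ℝ := fun t => Real.log (A t) with hu
  set u' : ℝ → ℝ := fun t => (2 * m' t / ε) / A t with hu'
  have hAderiv : ∀ t ∈ Set.Icc (0 : ℝ) T, HasDerivAt A (2 * m' t / ε) t := by
    intro t ht
    have := ((hderiv t ht).const_mul (2:ℝ)).div_const ε
    simpa [hA, mul_comm, mul_div_assoc] using (this.const_add 1)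
  have huderiv : ∀ t ∈ Set.Icc (0 : ℝ) T, HasDerivAt u (u' t) t := by
    intro t ht
    exact (hAderiv t ht).log (by have := hApos t ht; positivity)
  have hucont : ContinuousOn u (Set.Icc 0 T) :=
    fun t ht => ((huderiv t ht).continuousAt).continuousWithinAt
  have hbound : ∀ t ∈ Set.Ico (0 : ℝ) T, u' t ≤ (2 * κ / ε) * u t + 0 := by
    intro t ht
    have ht' : t ∈ Set.Icc (0:ℝ) T := Set.mem_Icc_of_Ico ht
    have hA1 := hApos t ht'
    have hAp : (0:ℝ) < A t := lt_of_lt_of_le one_pos hA1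
    have h1 := hineq t ht'
    have hlog : 0 ≤ Real.log (A t) := Real.log_nonneg hA1
    have hnum : 2 * m' t / ε ≤ (2 * κ / ε) * (A t * Real.log (A t)) := by
      have h2' := mul_le_mul_of_nonneg_left h1 (by positivity : (0:ℝ) ≤ 2/ε)
      have e1 : 2/ε * m' t = 2 * m' t / ε := by ring
      have e2 : 2/ε * (κ * (1 + 2 * m t / ε) * Real.log (1 + 2 * m t / ε))
          = 2 * κ / ε * (A t * Real.log (A t)) := by simp only [hA]; ring
      linarith
    calc u' t = (2 * m' t / ε) / A t := rfl
      _ ≤ ((2 * κ / ε) * (A t * Real.log (A t))) / A t := by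
          exact div_le_div_of_nonneg_right hnum hAp.le
      _ = (2 * κ / ε) * Real.log (A t) := by field_simp
      _ = (2 * κ / ε) * u t + 0 := by simp [hu]
  have hgron := le_gronwallBound_of_liminf_deriv_right_le hucont
    (fun x hx r hr => ((huderiv x (Set.mem_Icc_of_Ico hx)).hasDerivWithinAt.liminf_right_slope_le hr))
    (le_refl (u 0)) hbound
  intro t ht
  have h2 := hgron t ht
  rw [gronwallBound_ε0, sub_zero] at h2
  have hu0 : u 0 = Real.log (1 + 2 * M₀ / ε) := by simp [hu, hA, h0]
  have key : Real.log (1 + 2 * m t / ε) ≤ Real.exp (2 * κ * t / ε) * Real.log (1 + 2 * M₀ / ε) := by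
    have : 2 * κ / ε * t = 2 * κ * t / ε := by ring
    rw [hu0, this] at h2
    simpa [hu, hA, mul_comm] using h2
  refine ⟨key, ?_⟩
  have hA1 := hApos t ht
  have hApos' : (0:ℝ) < A t := lt_of_lt_of_le one_pos hA1
  have hA0 : (0:ℝ) < 1 + 2 * M₀ / ε := by positivity
  have : A t ≤ (1 + 2 * M₀ / ε) ^ Real.exp (2 * κ * t / ε) := by
    rw [← Real.exp_log hApos', Real.rpow_def_of_pos hA0]
    exact Real.exp_le_exp.2 (by rw [mul_comm]; exact key)
  have hmA : m t = ε / 2 * (A t - 1) := by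
    simp only [hA]; field_simp; ring
  rw [hmA]
  have : A t - 1 ≤ (1 + 2 * M₀ / ε) ^ Real.exp (2 * κ * t / ε) - 1 := by linarith
  nlinarith
end

section
/- Let (X, μ) be a finite measure space, and let ψ : S² × ℝ³ → [0, +∞] be jointly lower semicontinuous and convex in its second argument. Let τ_n, τ : X → S² be measurable with esssup_x |τ_n(x) − τ(x)| → 0 as n → ∞, and let W_n ⇀ W converge weakly in L²(μ; ℝ³). Then liminf_{n→∞} ∫_X ψ(τ_n(x), W_n(x)) dμ(x) ≥ ∫_X ψ(τ(x), W(x)) dμ(x). -/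
/-!
Adding `ε ‖w‖²` makes the integrand coercive, and costs at most `ε sup ‖Wₙ‖²`, which vanishes as
`ε → 0` because weakly convergent sequences are bounded.

For a coercive integrand `F`, lower semicontinuity and convexity give, at every `(τ, v)` and every
`c < F (τ, v)`, an affine `ℓ` with `c < ℓ v` and `ℓ ≤ F (σ, ·)` for all `σ` near `τ`: Hahn–Banach
separates `(v, c)` from the epigraph of `F (τ, ·)`, and compactness of balls makes the bound uniform
in `σ`. By Mazur's lemma, convex combinations of the tails of a subsequence realizing the `liminf`
converge strongly, hence a.e. along a further subsequence. Testing these combinations pointwise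
against the affine minorants, and then applying Fatou's lemma, gives the inequality.
-/

open MeasureTheory Filter
open scoped ENNReal RealInnerProductSpace

open Set Topology
open scoped NNReal

theorem LowerSemicontinuousOn.lowerSemicontinuous_piecewise_top {α γ : Type*}
    [TopologicalSpace α] [LinearOrder γ] [OrderTop γ] [TopologicalSpace γ] [ClosedIciTopology γ]
    {f : α → γ} {s : Set α} [DecidablePred (· ∈ s)] (hf : LowerSemicontinuousOn f s)
    (hs : IsClosed s) : LowerSemicontinuous (s.piecewise f fun _ => ⊤) := by
  have hepi : {p : α × γ | s.piecewise f (fun _ => ⊤) p.1 ≤ p.2} =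
      {p | p.1 ∈ s ∧ f p.1 ≤ p.2} ∪ {p | ⊤ ≤ p.2} := by
    ext ⟨x, y⟩
    by_cases hx : x ∈ s
    · simpa [hx] using fun hy : y = ⊤ => hy ▸ le_top
    · simp [hx]
  rw [lowerSemicontinuous_iff_isClosed_epigraph, hepi]
  exact ((lowerSemicontinuousOn_iff_isClosed_epigraph hs).1 hf).union
    (isClosed_Ici.preimage continuous_snd)

section ConvexENNReal

variable {E : Type*} [AddCommGroup E] [Module ℝ E]

theorem Convex.nnreal {s : Set E} (hs : Convex ℝ s) : Convex ℝ≥0 s :=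
  fun _ hx _ hy a b _ _ hab => by
    simpa [NNReal.smul_def] using hs hx hy a.coe_nonneg b.coe_nonneg (by exact_mod_cast hab)

theorem ConvexOn.ennreal_ofReal {s : Set E} {g : E → ℝ} (hg : ConvexOn ℝ s g) :
    ConvexOn ℝ≥0 s fun x => ENNReal.ofReal (g x) := by
  refine ⟨hg.1.nnreal, fun x hx y hy a b _ _ hab => ?_⟩
  calc ENNReal.ofReal (g (a • x + b • y))
      ≤ ENNReal.ofReal (a * g x + b * g y) := ENNReal.ofReal_le_ofReal <| by
        simpa [NNReal.smul_def] using hg.2 hx hy a.coe_nonneg b.coe_nonneg (by exact_mod_cast hab)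
    _ ≤ ENNReal.ofReal (a * g x) + ENNReal.ofReal (b * g y) := ENNReal.ofReal_add_le
    _ = a • ENNReal.ofReal (g x) + b • ENNReal.ofReal (g y) := by
        simp [ENNReal.ofReal_mul, ENNReal.smul_def]

theorem convexOn_nnreal_univ_iff {f : E → ℝ≥0∞} :
    ConvexOn ℝ≥0 univ f ↔ ∀ v w : E, ∀ a b : ℝ, 0 ≤ a → 0 ≤ b → a + b = 1 →
      f (a • v + b • w) ≤ ENNReal.ofReal a * f v + ENNReal.ofReal b * f w := by
  refine ⟨fun hf v w a b ha hb hab => ?_, fun hf => ⟨convex_univ, fun v _ w _ a b _ _ hab => ?_⟩⟩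
  · have h := hf.2 (mem_univ v) (mem_univ w) (zero_le (a := a.toNNReal))
      (zero_le (a := b.toNNReal)) (by rw [← Real.toNNReal_add ha hb, hab, Real.toNNReal_one])
    rwa [NNReal.smul_def, NNReal.smul_def, Real.coe_toNNReal _ ha, Real.coe_toNNReal _ hb] at h
  · simpa [NNReal.smul_def, ENNReal.smul_def] using
      hf v w a b a.coe_nonneg b.coe_nonneg (by exact_mod_cast hab)

end ConvexENNReal

section Separation

variable {E : Type*} [NormedAddCommGroup E] [NormedSpace ℝ E]

theorem exists_affine_lt_snd_of_notMem {C : Set (E × ℝ)} (hconv : Convex ℝ C)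
    (hclosed : IsClosed C) (hnonneg : ∀ p ∈ C, 0 ≤ p.2)
    (hup : ∀ p ∈ C, ∀ s : ℝ, 0 ≤ s → (p.1, p.2 + s) ∈ C) {v : E} {c : ℝ} (hvc : (v, c) ∉ C) :
    ∃ (l : StrongDual ℝ E) (a : ℝ), c < l v + a ∧ ∀ p ∈ C, l p.1 + a < p.2 := by
  rcases C.eq_empty_or_nonempty with rfl | ⟨p₀, hp₀⟩
  · exact ⟨0, c + 1, by simp, by simp⟩
  obtain ⟨L, u, hLv, hLC⟩ := geometric_hahn_banach_point_closed hconv hclosed hvc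
  set l₀ : StrongDual ℝ E := L.comp (.inl ℝ E ℝ)
  set β := L (0, 1)
  have hL : ∀ p : E × ℝ, L p = l₀ p.1 + p.2 * β := fun ⟨w, t⟩ =>
    calc L (w, t) = L ((w, 0) + t • (0, 1)) := by simp
      _ = l₀ w + t * β := by rw [map_add, map_smul, smul_eq_mul]; rfl
  -- `C` is stable under upward translation, so the separating hyperplane is not tilted downwards
  have hβ : 0 ≤ β := by
    by_contra! hβ
    set s := max 0 ((l₀ p₀.1 + p₀.2 * β - u) / -β)
    have hs : (l₀ p₀.1 + p₀.2 * β - u) / -β ≤ s := le_max_right _ _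
    rw [div_le_iff₀ (neg_pos.2 hβ)] at hs
    have := hLC _ (hup p₀ hp₀ s (le_max_left _ _))
    rw [hL] at this
    nlinarith
  -- tilting slightly upwards makes the hyperplane a graph over `E`
  set η := (u - L (v, c)) / (|c| + 1)
  have hη : 0 < η := div_pos (sub_pos.2 hLv) (by positivity)
  have hcη : c * η < u - L (v, c) := by
    have : (|c| + 1) * η = u - L (v, c) := by simp only [η]; field_simp
    nlinarith [le_abs_self c]
  have hβη : 0 < β + η := by linarith
  have hgraph : ∀ w, (-(β + η)⁻¹ • l₀) w + u / (β + η) = (u - l₀ w) / (β + η) := fun w => by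
    simp only [smul_apply, smul_eq_mul]
    field_simp
    ring
  refine ⟨-(β + η)⁻¹ • l₀, u / (β + η), ?_, fun p hp => ?_⟩
  · rw [hgraph, lt_div_iff₀ hβη]
    linarith [hL (v, c)]
  · rw [hgraph, div_lt_iff₀ hβη]
    nlinarith [hL p, hLC p hp, mul_nonneg (hnonneg p hp) hη.le]

theorem LowerSemicontinuous.exists_affine_lt_of_convexOn {f : E → ℝ≥0∞}
    (hf : LowerSemicontinuous f) (hconv : ConvexOn ℝ≥0 univ f) {v : E} {c : ℝ}
    (hc : ENNReal.ofReal c < f v) :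
    ∃ (l : StrongDual ℝ E) (a : ℝ), c < l v + a ∧
      ∀ w, ENNReal.ofReal (l w + a) < f w ∨ l w + a < 0 := by
  set C : Set (E × ℝ) := {p | 0 ≤ p.2 ∧ f p.1 ≤ ENNReal.ofReal p.2}
  have hCconv : Convex ℝ C := by
    rintro ⟨w₁, t₁⟩ ⟨ht₁, hf₁⟩ ⟨w₂, t₂⟩ ⟨ht₂, hf₂⟩ a b ha hb hab
    refine ⟨by simp only [Prod.snd_add, Prod.smul_snd, smul_eq_mul]; positivity, ?_⟩
    calc f (a • w₁ + b • w₂) ≤ ENNReal.ofReal a * f w₁ + ENNReal.ofReal b * f w₂ :=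
          convexOn_nnreal_univ_iff.1 hconv w₁ w₂ a b ha hb hab
      _ ≤ ENNReal.ofReal a * ENNReal.ofReal t₁ + ENNReal.ofReal b * ENNReal.ofReal t₂ := by
          gcongr
      _ = ENNReal.ofReal (a * t₁ + b * t₂) := by
          rw [ENNReal.ofReal_add (by positivity) (by positivity), ENNReal.ofReal_mul ha,
            ENNReal.ofReal_mul hb]
  have hCclosed : IsClosed C :=
    (isClosed_le continuous_const continuous_snd).inter <| hf.isClosed_epigraph.preimage <|
      continuous_fst.prodMk (ENNReal.continuous_ofReal.comp continuous_snd)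
  obtain ⟨l, a, hv, hC⟩ := exists_affine_lt_snd_of_notMem hCconv hCclosed (fun _ hp => hp.1)
    (fun p hp s hs => ⟨add_nonneg hp.1 hs,
      hp.2.trans (ENNReal.ofReal_le_ofReal (le_add_of_nonneg_right hs))⟩)
    (fun h => hc.not_ge h.2)
  refine ⟨l, a, hv, fun w => ?_⟩
  by_cases hw : f w = ⊤
  · exact .inl (hw ▸ ENNReal.ofReal_lt_top)
  have hlt := hC (w, (f w).toReal) ⟨ENNReal.toReal_nonneg, (ENNReal.ofReal_toReal hw).ge⟩
  rcases lt_or_ge (l w + a) 0 with hneg | hnonneg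
  · exact .inr hneg
  · left
    rw [← ENNReal.ofReal_toReal hw]
    exact (ENNReal.ofReal_lt_ofReal_iff (hnonneg.trans_lt hlt)).2 hlt

variable {T : Type*} [TopologicalSpace T] [ProperSpace E]

theorem LowerSemicontinuous.exists_affine_le_eventually_nhds {F : T × E → ℝ≥0∞}
    (hF : LowerSemicontinuous F) {ε : ℝ} (hε : 0 < ε)
    (hcoer : ∀ p, ENNReal.ofReal (ε * ‖p.2‖ ^ 2) ≤ F p) {τ : T}
    (hconv : ConvexOn ℝ≥0 univ fun w => F (τ, w)) {v : E} {c : ℝ}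
    (hc : ENNReal.ofReal c < F (τ, v)) :
    ∃ (l : StrongDual ℝ E) (a : ℝ), c < l v + a ∧
      ∀ᶠ σ in 𝓝 τ, ∀ w, ENNReal.ofReal (l w + a) ≤ F (σ, w) := by
  obtain ⟨l, a, hv, hτ⟩ :=
    (hF.comp (Continuous.prodMk_right τ)).exists_affine_lt_of_convexOn hconv hc
  set P : T → E → Prop := fun σ w => ENNReal.ofReal (l w + a) < F (σ, w) ∨ l w + a < 0
  have hℓ : Continuous fun w => l w + a := l.continuous.add continuous_const
  have hnear : ∀ w, ∀ᶠ p in 𝓝 (τ, w), P p.1 p.2 := fun w => by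
    rcases hτ w with h | h
    · obtain ⟨y, hy, hyF⟩ := exists_between h
      filter_upwards [hF _ y hyF, ((ENNReal.continuous_ofReal.comp (hℓ.comp continuous_snd)).tendsto
        (τ, w)).eventually (gt_mem_nhds hy)] with p hpF hpℓ
      exact .inl (hpℓ.trans hpF)
    · exact ((hℓ.comp continuous_snd).tendsto (τ, w)).eventually (gt_mem_nhds h) |>.mono
        fun _ => .inr
  -- coercivity makes the inequality automatic far out
  set R := (‖l‖ + |a|) / ε + 1
  have hfar : ∀ σ w, R < ‖w‖ → P σ w := fun σ w hw => by
    have hεR : ε * R = ‖l‖ + |a| + ε := by simp only [R]; field_simp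
    have hw1 : 1 ≤ ‖w‖ := by
      have : 1 ≤ R := le_add_of_nonneg_left (by positivity)
      linarith
    have hεw : ‖l‖ + |a| < ε * ‖w‖ := by nlinarith
    have hlw : l w + a < ε * ‖w‖ ^ 2 := by
      nlinarith [(le_abs_self _).trans (l.le_opNorm w), le_abs_self a,
        mul_le_mul_of_nonneg_left hw1 (abs_nonneg a)]
    exact .inl <| ((ENNReal.ofReal_lt_ofReal_iff (by positivity)).2 hlw).trans_le (hcoer (σ, w))
  have hball := (isCompact_closedBall (0 : E) R).eventually_forall_of_forall_eventually
    fun w _ => hnear w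
  refine ⟨l, a, hv, hball.mono fun σ hσ w => ?_⟩
  have hP : P σ w := by
    by_cases hw : ‖w‖ ≤ R
    · exact hσ w (mem_closedBall_zero_iff.2 hw)
    · exact hfar σ w (not_le.1 hw)
  rcases hP with h | h
  · exact h.le
  · simp [ENNReal.ofReal_of_nonpos h.le]

end Separation

section Pointwise

variable {E : Type*} [NormedAddCommGroup E] [NormedSpace ℝ E]

theorem ofReal_map_sum_add_le {ι : Type*} (l : StrongDual ℝ E) (a : ℝ) {t : Finset ι}
    {θ : ι → ℝ} (hθ0 : ∀ j ∈ t, 0 ≤ θ j) (hθ1 : ∑ j ∈ t, θ j = 1) (u : ι → E) :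
    ENNReal.ofReal (l (∑ j ∈ t, θ j • u j) + a) ≤
      ∑ j ∈ t, ENNReal.ofReal (θ j) * ENNReal.ofReal (l (u j) + a) := by
  have hsum : l (∑ j ∈ t, θ j • u j) + a = ∑ j ∈ t, θ j * (l (u j) + a) := by
    simp only [map_sum, map_smul, smul_eq_mul, mul_add, Finset.sum_add_distrib,
      ← Finset.sum_mul, hθ1, one_mul]
  rw [hsum]
  refine (Finset.le_sum_of_subadditive _ ENNReal.ofReal_zero.le (fun _ _ => ENNReal.ofReal_add_le)
    _ _).trans_eq ?_
  exact Finset.sum_congr rfl fun j hj => ENNReal.ofReal_mul (hθ0 j hj)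

variable {T : Type*} [TopologicalSpace T] [ProperSpace E]

theorem LowerSemicontinuous.le_liminf_sum_of_tendsto {F : T × E → ℝ≥0∞}
    (hF : LowerSemicontinuous F) {ε : ℝ} (hε : 0 < ε)
    (hcoer : ∀ p, ENNReal.ofReal (ε * ‖p.2‖ ^ 2) ≤ F p) {τ : T}
    (hconv : ConvexOn ℝ≥0 univ fun w => F (τ, w)) {σ : ℕ → T} (hσ : Tendsto σ atTop (𝓝 τ))
    {u : ℕ → E} {N : ℕ → ℕ} (hN : Tendsto N atTop atTop) {t : ℕ → Finset ℕ}
    {θ : ℕ → ℕ → ℝ} (hθ0 : ∀ k, ∀ j ∈ t k, 0 ≤ θ k j) (hθ1 : ∀ k, ∑ j ∈ t k, θ k j = 1)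
    {v : E} (hv : Tendsto (fun k => ∑ j ∈ t k, θ k j • u (j + N k)) atTop (𝓝 v)) :
    F (τ, v) ≤ liminf (fun k =>
      ∑ j ∈ t k, ENNReal.ofReal (θ k j) * F (σ (j + N k), u (j + N k))) atTop := by
  refine le_of_forall_lt fun b hb => ?_
  obtain ⟨b', hbb', hb'⟩ := exists_between hb
  have hb'top : b' ≠ ⊤ := hb'.ne_top
  obtain ⟨l, a, hlv, hev⟩ := hF.exists_affine_le_eventually_nhds hε hcoer hconv
    (c := b'.toReal) (by rwa [ENNReal.ofReal_toReal hb'top])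
  obtain ⟨n₀, hn₀⟩ := eventually_atTop.1 (hσ.eventually hev)
  have hℓ : ∀ᶠ k in atTop, b'.toReal < l (∑ j ∈ t k, θ k j • u (j + N k)) + a :=
    (((l.continuous.add continuous_const).tendsto v).comp hv).eventually (lt_mem_nhds hlv)
  refine hbb'.trans_le (le_liminf_of_le (by isBoundedDefault) ?_)
  filter_upwards [hℓ, hN.eventually_ge_atTop n₀] with k hk hNk
  calc b' = ENNReal.ofReal b'.toReal := (ENNReal.ofReal_toReal hb'top).symm
    _ ≤ ENNReal.ofReal (l (∑ j ∈ t k, θ k j • u (j + N k)) + a) := ENNReal.ofReal_le_ofReal hk.le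
    _ ≤ ∑ j ∈ t k, ENNReal.ofReal (θ k j) * ENNReal.ofReal (l (u (j + N k)) + a) :=
        ofReal_map_sum_add_le l a (hθ0 k) (hθ1 k) _
    _ ≤ ∑ j ∈ t k, ENNReal.ofReal (θ k j) * F (σ (j + N k), u (j + N k)) :=
        Finset.sum_le_sum fun j _ => by gcongr; exact hn₀ _ (le_add_left hNk) _

end Pointwise

section Hilbert

variable {H : Type*} [NormedAddCommGroup H] [InnerProductSpace ℝ H] [CompleteSpace H]
  {W : ℕ → H} {W' : H}

theorem mem_closure_convexHull_range_of_tendsto_inner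
    (hW : ∀ φ, Tendsto (fun n => ⟪φ, W n⟫) atTop (𝓝 ⟪φ, W'⟫)) :
    W' ∈ closure (convexHull ℝ (range W)) := by
  by_contra h
  obtain ⟨g, u, hg, hu⟩ := geometric_hahn_banach_closed_point
    (convex_convexHull ℝ _).closure isClosed_closure h
  have hgW : Tendsto (fun n => g (W n)) atTop (𝓝 (g W')) := by
    simpa using hW ((InnerProductSpace.toDual ℝ H).symm g)
  obtain ⟨n, hn⟩ := (hgW.eventually (lt_mem_nhds hu)).exists
  exact (hg _ (subset_closure (subset_convexHull ℝ _ (mem_range_self n)))).not_gt hn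

theorem exists_tendsto_sum_smul_of_tendsto_inner
    (hW : ∀ φ, Tendsto (fun n => ⟪φ, W n⟫) atTop (𝓝 ⟪φ, W'⟫)) :
    ∃ (t : ℕ → Finset ℕ) (θ : ℕ → ℕ → ℝ), (∀ k, ∀ j ∈ t k, 0 ≤ θ k j) ∧
      (∀ k, ∑ j ∈ t k, θ k j = 1) ∧
      Tendsto (fun k => ∑ j ∈ t k, θ k j • W (j + k)) atTop (𝓝 W') := by
  have hk : ∀ k : ℕ, ∃ (t : Finset ℕ) (θ : ℕ → ℝ), (∀ j ∈ t, 0 ≤ θ j) ∧ ∑ j ∈ t, θ j = 1 ∧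
      dist (∑ j ∈ t, θ j • W (j + k)) W' < 1 / (k + 1) := fun k => by
    have hcl := mem_closure_convexHull_range_of_tendsto_inner
      fun φ => (hW φ).comp (tendsto_add_atTop_nat k)
    obtain ⟨y, hy, hyW⟩ := Metric.mem_closure_iff.1 hcl (1 / (k + 1)) Nat.one_div_pos_of_nat
    rw [convexHull_range_eq_exists_affineCombination] at hy
    obtain ⟨t, θ, hθ0, hθ1, rfl⟩ := hy
    refine ⟨t, θ, hθ0, hθ1, ?_⟩
    rwa [Finset.affineCombination_eq_linear_combination _ _ _ hθ1, dist_comm] at hyW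
  choose t θ hθ0 hθ1 hdist using hk
  exact ⟨t, θ, hθ0, hθ1, tendsto_iff_dist_tendsto_zero.2 <| squeeze_zero (fun _ => dist_nonneg)
    (fun k => (hdist k).le) tendsto_one_div_add_atTop_nhds_zero_nat⟩

theorem exists_norm_le_of_tendsto_inner
    (hW : ∀ φ, Tendsto (fun n => ⟪φ, W n⟫) atTop (𝓝 ⟪φ, W'⟫)) : ∃ M, ∀ n, ‖W n‖ ≤ M := by
  obtain ⟨M, hM⟩ := banach_steinhaus (g := fun n => innerSL ℝ (W n)) fun φ => by
    obtain ⟨C, hC⟩ := isBounded_iff_forall_norm_le.1 (Metric.isBounded_range_of_tendsto _ (hW φ))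
    exact ⟨C, fun n => by simpa [real_inner_comm] using hC _ (mem_range_self n)⟩
  exact ⟨M, fun n => by simpa using hM n⟩

end Hilbert

section Integral

theorem ae_tendsto_of_forall_exists_ae_norm_sub_le {X G : Type*} [MeasurableSpace X]
    {μ : Measure X} [SeminormedAddCommGroup G] {f : ℕ → X → G} {g : X → G}
    (h : ∀ δ : ℝ, 0 < δ → ∃ N : ℕ, ∀ n ≥ N, ∀ᵐ x ∂μ, ‖f n x - g x‖ ≤ δ) :
    ∀ᵐ x ∂μ, Tendsto (fun n => f n x) atTop (𝓝 (g x)) := by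
  choose N hN using fun k : ℕ => h (1 / (k + 1)) Nat.one_div_pos_of_nat
  have hae : ∀ᵐ x ∂μ, ∀ k, ∀ n ≥ N k, ‖f n x - g x‖ ≤ 1 / (k + 1) := by
    simpa only [ae_all_iff, eventually_imp_distrib_left] using hN
  filter_upwards [hae] with x hx
  refine Metric.tendsto_atTop.2 fun δ hδ => ?_
  obtain ⟨k, hk⟩ := exists_nat_one_div_lt hδ
  exact ⟨N k, fun n hn => (dist_eq_norm _ _).trans_lt ((hx k n hn).trans_lt hk)⟩

theorem lintegral_ofReal_mul_norm_sq {X E : Type*} [MeasurableSpace X] {μ : Measure X}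
    [NormedAddCommGroup E] [InnerProductSpace ℝ E] (f : Lp E 2 μ) {c : ℝ} (hc : 0 ≤ c) :
    ∫⁻ x, ENNReal.ofReal (c * ‖f x‖ ^ 2) ∂μ = ENNReal.ofReal (c * ‖f‖ ^ 2) := by
  simp_rw [← real_inner_self_eq_norm_sq]
  rw [← ofReal_integral_eq_lintegral_ofReal ((L2.integrable_inner f f).const_mul c)
    (ae_of_all _ fun x => mul_nonneg hc real_inner_self_nonneg), integral_const_mul,
    L2.inner_def]

variable {X : Type*} [MeasurableSpace X] {μ : Measure X}
  {T : Type*} [TopologicalSpace T] [MeasurableSpace T] [OpensMeasurableSpace T]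
  {E : Type*} [NormedAddCommGroup E] [InnerProductSpace ℝ E] [FiniteDimensional ℝ E]
  [MeasurableSpace E] [BorelSpace E]
  {F : T × E → ℝ≥0∞} {τn : ℕ → X → T} {τ : X → T} {W : ℕ → Lp E 2 μ} {W' : Lp E 2 μ}

theorem LowerSemicontinuous.lintegral_le_limsup_of_coercive (hF : LowerSemicontinuous F)
    {ε : ℝ} (hε : 0 < ε) (hcoer : ∀ p, ENNReal.ofReal (ε * ‖p.2‖ ^ 2) ≤ F p)
    (hτn : ∀ n, Measurable (τn n)) (hτ : ∀ᵐ x ∂μ, Tendsto (fun n => τn n x) atTop (𝓝 (τ x)))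
    (hconv : ∀ᵐ x ∂μ, ConvexOn ℝ≥0 univ fun w => F (τ x, w))
    (hW : ∀ φ, Tendsto (fun n => ⟪φ, W n⟫) atTop (𝓝 ⟪φ, W'⟫)) :
    ∫⁻ x, F (τ x, W' x) ∂μ ≤ limsup (fun n => ∫⁻ x, F (τn n x, W n x) ∂μ) atTop := by
  set I := fun n => ∫⁻ x, F (τn n x, W n x) ∂μ
  obtain ⟨t, θ, hθ0, hθ1, hV⟩ := exists_tendsto_sum_smul_of_tendsto_inner hW
  obtain ⟨ns, hns, hnsae⟩ := (tendstoInMeasure_of_tendsto_Lp hV).exists_seq_tendsto_ae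
  have hVae : ∀ᵐ x ∂μ, ∀ k, (∑ j ∈ t k, θ k j • W (j + k) : Lp E 2 μ) x =
      ∑ j ∈ t k, θ k j • W (j + k) x := ae_all_iff.2 fun k => by
    filter_upwards [Lp.coeFn_finsetSum (t k) (fun j => θ k j • W (j + k)),
      ae_all_iff.2 fun j => Lp.coeFn_smul (θ k j) (W (j + k))] with x hsum hsmul
    rw [hsum, Finset.sum_apply]
    exact Finset.sum_congr rfl fun j _ => hsmul j
  have hmeas : ∀ n, AEMeasurable (fun x => F (τn n x, W n x)) μ := fun n =>
    hF.measurable.comp_aemeasurable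
      ((hτn n).aemeasurable.prodMk (Lp.aestronglyMeasurable (W n)).aemeasurable)
  set G : ℕ → X → ℝ≥0∞ := fun i x =>
    ∑ j ∈ t (ns i), ENNReal.ofReal (θ (ns i) j) * F (τn (j + ns i) x, W (j + ns i) x)
  have hpt : ∀ᵐ x ∂μ, F (τ x, W' x) ≤ liminf (fun i => G i x) atTop := by
    filter_upwards [hτ, hconv, hnsae, hVae] with x hτx hconvx hnsx hVx
    simp only [hVx] at hnsx
    exact hF.le_liminf_sum_of_tendsto (σ := fun n => τn n x) (u := fun n => W n x) (N := ns)
      (t := fun i => t (ns i)) (θ := fun i => θ (ns i)) hε hcoer hconvx hτx hns.tendsto_atTop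
      (fun i => hθ0 (ns i)) (fun i => hθ1 (ns i)) hnsx
  have hG : ∀ i, ∫⁻ x, G i x ∂μ ≤ ⨆ n ≥ ns i, I n := fun i => by
    rw [lintegral_finsetSum' _ fun j _ => (hmeas _).const_mul _]
    calc ∑ j ∈ t (ns i), ∫⁻ x, ENNReal.ofReal (θ (ns i) j) *
          F (τn (j + ns i) x, W (j + ns i) x) ∂μ
        = ∑ j ∈ t (ns i), ENNReal.ofReal (θ (ns i) j) * I (j + ns i) :=
          Finset.sum_congr rfl fun j _ => lintegral_const_mul'' _ (hmeas _)
      _ ≤ ∑ j ∈ t (ns i), ENNReal.ofReal (θ (ns i) j) * ⨆ n ≥ ns i, I n := by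
          gcongr with j
          exact le_iSup₂_of_le (j + ns i) (Nat.le_add_left _ _) le_rfl
      _ = ⨆ n ≥ ns i, I n := by
          rw [← Finset.sum_mul, ← ENNReal.ofReal_sum_of_nonneg (hθ0 _), hθ1, ENNReal.ofReal_one,
            one_mul]
  have htail : Tendsto (fun m => ⨆ n ≥ m, I n) atTop (𝓝 (limsup I atTop)) := by
    rw [limsup_eq_iInf_iSup_of_nat]
    exact tendsto_atTop_iInf fun m m' hmm' => biSup_mono fun n hn => hmm'.trans hn
  calc ∫⁻ x, F (τ x, W' x) ∂μ ≤ ∫⁻ x, liminf (fun i => G i x) atTop ∂μ := lintegral_mono_ae hpt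
    _ ≤ liminf (fun i => ∫⁻ x, G i x ∂μ) atTop :=
        lintegral_liminf_le' fun i => Finset.aemeasurable_fun_sum _ fun j _ => (hmeas _).const_mul _
    _ ≤ liminf (fun i => ⨆ n ≥ ns i, I n) atTop := liminf_le_liminf (.of_forall hG)
    _ = limsup I atTop := (htail.comp hns.tendsto_atTop).liminf_eq

theorem LowerSemicontinuous.lintegral_le_liminf_of_coercive (hF : LowerSemicontinuous F)
    {ε : ℝ} (hε : 0 < ε) (hcoer : ∀ p, ENNReal.ofReal (ε * ‖p.2‖ ^ 2) ≤ F p)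
    (hτn : ∀ n, Measurable (τn n)) (hτ : ∀ᵐ x ∂μ, Tendsto (fun n => τn n x) atTop (𝓝 (τ x)))
    (hconv : ∀ᵐ x ∂μ, ConvexOn ℝ≥0 univ fun w => F (τ x, w))
    (hW : ∀ φ, Tendsto (fun n => ⟪φ, W n⟫) atTop (𝓝 ⟪φ, W'⟫)) :
    ∫⁻ x, F (τ x, W' x) ∂μ ≤ liminf (fun n => ∫⁻ x, F (τn n x, W n x) ∂μ) atTop := by
  obtain ⟨s, hIs, hs⟩ :=
    exists_seq_tendsto_liminf (f := atTop) (u := fun n => ∫⁻ x, F (τn n x, W n x) ∂μ)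
  rw [← hIs.limsup_eq]
  exact hF.lintegral_le_limsup_of_coercive (τn := fun n => τn (s n)) (W := fun n => W (s n))
    hε hcoer (fun n => hτn (s n)) (hτ.mono fun x hx => hx.comp hs) hconv fun φ => (hW φ).comp hs

theorem LowerSemicontinuous.lintegral_le_liminf (hF : LowerSemicontinuous F)
    (hτn : ∀ n, Measurable (τn n)) (hτ : ∀ᵐ x ∂μ, Tendsto (fun n => τn n x) atTop (𝓝 (τ x)))
    (hconv : ∀ᵐ x ∂μ, ConvexOn ℝ≥0 univ fun w => F (τ x, w))
    (hW : ∀ φ, Tendsto (fun n => ⟪φ, W n⟫) atTop (𝓝 ⟪φ, W'⟫)) :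
    ∫⁻ x, F (τ x, W' x) ∂μ ≤ liminf (fun n => ∫⁻ x, F (τn n x, W n x) ∂μ) atTop := by
  set L := liminf (fun n => ∫⁻ x, F (τn n x, W n x) ∂μ) atTop
  obtain ⟨M, hM⟩ := exists_norm_le_of_tendsto_inner hW
  have hpert : ∀ ε : ℝ, 0 < ε → ∫⁻ x, F (τ x, W' x) ∂μ ≤ L + ENNReal.ofReal (ε * M ^ 2) := by
    intro ε hε
    set Fε : T × E → ℝ≥0∞ := fun p => F p + ENNReal.ofReal (ε * ‖p.2‖ ^ 2)
    have hFε : LowerSemicontinuous Fε := hF.add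
      (ENNReal.continuous_ofReal.comp (by fun_prop)).lowerSemicontinuous
    have hconvε : ∀ᵐ x ∂μ, ConvexOn ℝ≥0 univ fun w => Fε (τ x, w) := hconv.mono fun x hx =>
      hx.add ((((convexOn_norm convex_univ).pow (fun _ _ => norm_nonneg _) 2).smul
        hε.le).ennreal_ofReal)
    have hI : ∀ n, ∫⁻ x, Fε (τn n x, W n x) ∂μ ≤
        ∫⁻ x, F (τn n x, W n x) ∂μ + ENNReal.ofReal (ε * M ^ 2) := fun n => by
      rw [lintegral_add_right' _ (by fun_prop), lintegral_ofReal_mul_norm_sq _ hε.le]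
      gcongr
      exact hM n
    calc ∫⁻ x, F (τ x, W' x) ∂μ ≤ ∫⁻ x, Fε (τ x, W' x) ∂μ := lintegral_mono fun _ => le_self_add
      _ ≤ liminf (fun n => ∫⁻ x, Fε (τn n x, W n x) ∂μ) atTop :=
          hFε.lintegral_le_liminf_of_coercive hε (fun _ => le_add_self) hτn hτ hconvε hW
      _ ≤ liminf (fun n => ∫⁻ x, F (τn n x, W n x) ∂μ + ENNReal.ofReal (ε * M ^ 2)) atTop :=
          liminf_le_liminf (.of_forall hI)
      _ = L + ENNReal.ofReal (ε * M ^ 2) :=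
          liminf_add_const _ _ _ (by isBoundedDefault) (by isBoundedDefault)
  refine ENNReal.le_of_forall_pos_le_add fun δ hδ _ =>
    (hpert (δ / (M ^ 2 + 1)) (div_pos hδ (by positivity))).trans ?_
  gcongr
  rw [← ENNReal.ofReal_coe_nnreal]
  refine ENNReal.ofReal_le_ofReal ?_
  rw [div_mul_eq_mul_div, div_le_iff₀ (by positivity)]
  exact mul_le_mul_of_nonneg_left (by linarith) δ.coe_nonneg

end Integral

theorem stmt17_general {X : Type*} [MeasurableSpace X] (μ : Measure X)
    (ψ : EuclideanSpace ℝ (Fin 3) → EuclideanSpace ℝ (Fin 3) → ℝ≥0∞)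
    (hlsc : LowerSemicontinuousOn
      (fun p : EuclideanSpace ℝ (Fin 3) × EuclideanSpace ℝ (Fin 3) => ψ p.1 p.2)
      ((Metric.sphere (0 : EuclideanSpace ℝ (Fin 3)) 1) ×ˢ Set.univ))
    (hconv : ∀ τ : EuclideanSpace ℝ (Fin 3), ‖τ‖ = 1 →
      ∀ v w : EuclideanSpace ℝ (Fin 3), ∀ a b : ℝ, 0 ≤ a → 0 ≤ b → a + b = 1 →
        ψ τ (a • v + b • w) ≤ ENNReal.ofReal a * ψ τ v + ENNReal.ofReal b * ψ τ w)
    (τn : ℕ → X → EuclideanSpace ℝ (Fin 3)) (τ : X → EuclideanSpace ℝ (Fin 3))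
    (hτnmeas : ∀ n, Measurable (τn n))
    (hτnunit : ∀ n x, ‖τn n x‖ = 1) (hτunit : ∀ x, ‖τ x‖ = 1)
    (hτconv : ∀ δ : ℝ, 0 < δ → ∃ N : ℕ, ∀ n ≥ N, ∀ᵐ x ∂μ, ‖τn n x - τ x‖ ≤ δ)
    (W : ℕ → Lp (EuclideanSpace ℝ (Fin 3)) 2 μ) (W' : Lp (EuclideanSpace ℝ (Fin 3)) 2 μ)
    (hweak : ∀ φ : Lp (EuclideanSpace ℝ (Fin 3)) 2 μ,
      Tendsto (fun n => (⟪φ, W n⟫ : ℝ)) atTop (nhds (⟪φ, W'⟫ : ℝ))) :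
    (∫⁻ x, ψ (τ x) (W' x) ∂μ) ≤ atTop.liminf fun n => ∫⁻ x, ψ (τn n x) (W n x) ∂μ := by
  classical
  set S := Metric.sphere (0 : EuclideanSpace ℝ (Fin 3)) 1 ×ˢ (univ : Set (EuclideanSpace ℝ (Fin 3)))
  have hΨ : ∀ σ w, ‖σ‖ = 1 → S.piecewise (fun p => ψ p.1 p.2) (fun _ => ⊤) (σ, w) = ψ σ w :=
    fun σ w hσ => S.piecewise_eq_of_mem _ _ (by simpa [S] using hσ)
  have hΨconv : ∀ x, ConvexOn ℝ≥0 univ fun w =>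
      S.piecewise (fun p => ψ p.1 p.2) (fun _ => ⊤) (τ x, w) := fun x => by
    simpa only [hΨ _ _ (hτunit x)] using convexOn_nnreal_univ_iff.2 (hconv _ (hτunit x))
  have key := (hlsc.lowerSemicontinuous_piecewise_top
    (Metric.isClosed_sphere.prod isClosed_univ)).lintegral_le_liminf (τ := τ) (W' := W') hτnmeas
    (ae_tendsto_of_forall_exists_ae_norm_sub_le hτconv) (ae_of_all _ hΨconv) hweak
  simpa only [hΨ _ _ (hτunit _), hΨ _ _ (hτnunit _ _)] using key

/-- Lower semicontinuity of the convex, possibly infinite-valued part of the dissipation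
potential: for `ψ : S² × ℝ³ → [0,∞]` jointly lower semicontinuous and convex in its
second argument, tangent fields `τₙ → τ` uniformly (essentially) with values in `S²`,
and `Wₙ ⇀ W` weakly in `L²(μ;ℝ³)`,
`liminf ∫ ψ(τₙ, Wₙ) dμ ≥ ∫ ψ(τ, W) dμ`. -/
theorem stmt17 {X : Type*} [MeasurableSpace X] (μ : Measure X) [IsFiniteMeasure μ]
    (ψ : EuclideanSpace ℝ (Fin 3) → EuclideanSpace ℝ (Fin 3) → ℝ≥0∞)
    (hlsc : LowerSemicontinuousOn
      (fun p : EuclideanSpace ℝ (Fin 3) × EuclideanSpace ℝ (Fin 3) => ψ p.1 p.2)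
      ((Metric.sphere (0 : EuclideanSpace ℝ (Fin 3)) 1) ×ˢ Set.univ))
    (hconv : ∀ τ : EuclideanSpace ℝ (Fin 3), ‖τ‖ = 1 →
      ∀ v w : EuclideanSpace ℝ (Fin 3), ∀ a b : ℝ, 0 ≤ a → 0 ≤ b → a + b = 1 →
        ψ τ (a • v + b • w) ≤ ENNReal.ofReal a * ψ τ v + ENNReal.ofReal b * ψ τ w)
    (τn : ℕ → X → EuclideanSpace ℝ (Fin 3)) (τ : X → EuclideanSpace ℝ (Fin 3))
    (hτnmeas : ∀ n, Measurable (τn n)) (hτmeas : Measurable τ)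
    (hτnunit : ∀ n x, ‖τn n x‖ = 1) (hτunit : ∀ x, ‖τ x‖ = 1)
    (hτconv : ∀ δ : ℝ, 0 < δ → ∃ N : ℕ, ∀ n ≥ N, ∀ᵐ x ∂μ, ‖τn n x - τ x‖ ≤ δ)
    (W : ℕ → Lp (EuclideanSpace ℝ (Fin 3)) 2 μ) (W' : Lp (EuclideanSpace ℝ (Fin 3)) 2 μ)
    (hweak : ∀ φ : Lp (EuclideanSpace ℝ (Fin 3)) 2 μ,
      Tendsto (fun n => (⟪φ, W n⟫ : ℝ)) atTop (nhds (⟪φ, W'⟫ : ℝ))) :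
    (∫⁻ x, ψ (τ x) (W' x) ∂μ) ≤ atTop.liminf fun n => ∫⁻ x, ψ (τn n x) (W n x) ∂μ :=
  stmt17_general μ ψ hlsc hconv τn τ hτnmeas hτnunit hτunit hτconv W W' hweak
end
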